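/- Iteration of tangents: if A ⊆ ℝⁿ is closed, x ∈ A, B ∈ Tan(A,x), and C ∈ Tan(B,0), then C ∈ Tan(A,x). -/

import Mathlib

/-!
If the blow-ups of `A` at `x` with scales `rᵢ` converge to `B` and those of `B` at `0` with scales
`tⱼ` converge to `C`, pick `i(j)` so that on the unit ball the relative Walkup–Wets distance
between `blowup A x r_{i(j)}` and `B` is below `tⱼ / (j + 1)`. Since
`blowup A x (s * t) = t⁻¹ • blowup A x s`, and dilating by `t⁻¹` multiplies this distance on the
ball of radius `ρ` by at most `1 / (ρ t)`, the blow-ups of `A` at scales `r_{i(j)} tⱼ` are then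
asymptotic to those of `B` at scales `tⱼ` on every ball. A quasi-triangle inequality for the
relative Walkup–Wets distance (constant `2`, doubled radius) finishes the argument.
-/

open Metric Set Filter Topology Pointwise

noncomputable section

/-- Excess of `A` over `B`: `sup_{a ∈ A} inf_{b ∈ B} |a - b|` (extended-real valued). -/
def ex {n : ℕ} (A B : Set (EuclideanSpace ℝ (Fin n))) : ENNReal :=
  ⨆ a ∈ A, EMetric.infEdist a B

/-- Relative excess of `A` in the closed ball `B(x,r)` over `B`. -/
def relEx {n : ℕ} (x : EuclideanSpace ℝ (Fin n)) (r : ℝ)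
    (A B : Set (EuclideanSpace ℝ (Fin n))) : ℝ :=
  (ex (A ∩ closedBall x r) B).toReal / r

/-- Relative Walkup–Wets distance in `B(x,r)`. -/
def WW {n : ℕ} (x : EuclideanSpace ℝ (Fin n)) (r : ℝ)
    (A B : Set (EuclideanSpace ℝ (Fin n))) : ℝ :=
  max (relEx x r A B) (relEx x r B A)

/-- Attouch–Wets convergence of a sequence of sets to `L` (all sets containing `0`). -/
def AWT {n : ℕ} (F : ℕ → Set (EuclideanSpace ℝ (Fin n)))
    (L : Set (EuclideanSpace ℝ (Fin n))) : Prop :=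
  ∀ r : ℝ, 0 < r → Filter.Tendsto (fun i => WW (0 : EuclideanSpace ℝ (Fin n)) r (F i) L)
    Filter.atTop (nhds 0)

/-- The blow-up `(A - x)/t` of a set `A` at `x` with scale `t`. -/
def blowup {n : ℕ} (A : Set (EuclideanSpace ℝ (Fin n))) (x : EuclideanSpace ℝ (Fin n))
    (t : ℝ) : Set (EuclideanSpace ℝ (Fin n)) :=
  (fun a => t⁻¹ • (a - x)) '' A

/-- `T` is a pseudotangent set of `A` at `x` directed along `D`. -/
def IsPseudoTangentAlong {n : ℕ} (A : Set (EuclideanSpace ℝ (Fin n)))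
    (x : EuclideanSpace ℝ (Fin n)) (D : Set (EuclideanSpace ℝ (Fin n)))
    (T : Set (EuclideanSpace ℝ (Fin n))) : Prop :=
  IsClosed T ∧ (0 : EuclideanSpace ℝ (Fin n)) ∈ T ∧
    ∃ (xs : ℕ → EuclideanSpace ℝ (Fin n)) (rs : ℕ → ℝ),
      (∀ i, xs i ∈ A) ∧ (∀ i, 0 < rs i) ∧
      Filter.Tendsto xs Filter.atTop (nhds x) ∧
      Filter.Tendsto rs Filter.atTop (nhds 0) ∧
      (∀ i, (rs i)⁻¹ • (xs i - x) ∈ D) ∧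
      AWT (fun i => blowup A (xs i) (rs i)) T

/-- `T` is a pseudotangent set of `A` at `x`. -/
def IsPseudoTangent {n : ℕ} (A : Set (EuclideanSpace ℝ (Fin n)))
    (x : EuclideanSpace ℝ (Fin n)) (T : Set (EuclideanSpace ℝ (Fin n))) : Prop :=
  IsPseudoTangentAlong A x Set.univ T

/-- `T` is a tangent set of `A` at `x`. -/
def IsTangent {n : ℕ} (A : Set (EuclideanSpace ℝ (Fin n)))
    (x : EuclideanSpace ℝ (Fin n)) (T : Set (EuclideanSpace ℝ (Fin n))) : Prop :=
  IsClosed T ∧ (0 : EuclideanSpace ℝ (Fin n)) ∈ T ∧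
    ∃ rs : ℕ → ℝ, (∀ i, 0 < rs i) ∧ Filter.Tendsto rs Filter.atTop (nhds 0) ∧
      AWT (fun i => blowup A x (rs i)) T

section

variable {n : ℕ}

local notation "E" => EuclideanSpace ℝ (Fin n)

lemma ex_le_iff {A B : Set E} {ε : ENNReal} :
    ex A B ≤ ε ↔ ∀ a ∈ A, infEDist a B ≤ ε :=
  iSup₂_le_iff

lemma infEDist_le_ex {A B : Set E} {a : E} (ha : a ∈ A) : infEDist a B ≤ ex A B :=
  le_iSup₂_of_le a ha le_rfl

lemma ex_mono_left {A A' B : Set E} (h : A ⊆ A') : ex A B ≤ ex A' B :=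
  ex_le_iff.2 fun _ ha => infEDist_le_ex (h ha)

lemma ex_inter_closedBall_le {S B : Set E} (h0 : (0 : E) ∈ B) (ρ : ℝ) :
    ex (S ∩ closedBall 0 ρ) B ≤ ENNReal.ofReal ρ :=
  ex_le_iff.2 fun a ha => (infEDist_le_edist_of_mem h0).trans <| by
    rw [edist_dist]
    exact ENNReal.ofReal_le_ofReal (mem_closedBall.mp ha.2)

lemma ex_inter_closedBall_ne_top {S B : Set E} (h0 : (0 : E) ∈ B) (ρ : ℝ) :
    ex (S ∩ closedBall 0 ρ) B ≠ ⊤ :=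
  ((ex_inter_closedBall_le h0 ρ).trans_lt ENNReal.ofReal_lt_top).ne

lemma ex_inter_closedBall_mono {S B : Set E} (h0 : (0 : E) ∈ B) {ρ ρ' : ℝ} (h : ρ ≤ ρ') :
    (ex (S ∩ closedBall 0 ρ) B).toReal ≤ (ex (S ∩ closedBall 0 ρ') B).toReal :=
  ENNReal.toReal_mono (ex_inter_closedBall_ne_top h0 ρ')
    (ex_mono_left (inter_subset_inter_right _ (closedBall_subset_closedBall h)))

lemma WW_nonneg {S T : Set E} {r : ℝ} (hr : 0 < r) : 0 ≤ WW 0 r S T :=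
  le_max_of_le_left (div_nonneg ENNReal.toReal_nonneg hr.le)

lemma relEx_le_mul_relEx_of_le {S T : Set E} (h0 : (0 : E) ∈ T) {ρ ρ' : ℝ} (hρ : 0 < ρ)
    (h : ρ ≤ ρ') : relEx 0 ρ S T ≤ (ρ' / ρ) * relEx 0 ρ' S T := by
  have hρ' : 0 < ρ' := hρ.trans_le h
  calc relEx 0 ρ S T ≤ (ex (S ∩ closedBall 0 ρ') T).toReal / ρ :=
        div_le_div_of_nonneg_right (ex_inter_closedBall_mono h0 h) hρ.le
    _ = (ρ' / ρ) * relEx 0 ρ' S T := by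
        unfold relEx
        field_simp

lemma WW_le_mul_WW_of_le {S T : Set E} (h0S : (0 : E) ∈ S) (h0T : (0 : E) ∈ T) {ρ ρ' : ℝ}
    (hρ : 0 < ρ) (h : ρ ≤ ρ') : WW 0 ρ S T ≤ (ρ' / ρ) * WW 0 ρ' S T := by
  have hc : 0 ≤ ρ' / ρ := div_nonneg (hρ.trans_le h).le hρ.le
  refine max_le ?_ ?_
  · exact (relEx_le_mul_relEx_of_le h0T hρ h).trans
      (mul_le_mul_of_nonneg_left (le_max_left _ _) hc)
  · exact (relEx_le_mul_relEx_of_le h0S hρ h).trans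
      (mul_le_mul_of_nonneg_left (le_max_right _ _) hc)

lemma ex_smul₀ {c : ℝ} (hc : c ≠ 0) (X Y : Set E) :
    ex (c • X) (c • Y) = ‖c‖₊ • ex X Y := by
  change (⨆ a ∈ c • X, infEDist a (c • Y)) = ‖c‖₊ • ⨆ a ∈ X, infEDist a Y
  rw [← Set.image_smul, iSup_image]
  simp_rw [infEDist_smul₀ hc, ENNReal.smul_iSup]

lemma inv_smul_inter_closedBall {t : ℝ} (ht : 0 < t) (S : Set E) (r : ℝ) :
    t⁻¹ • S ∩ closedBall 0 r = t⁻¹ • (S ∩ closedBall 0 (r * t)) := by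
  rw [smul_set_inter₀ (inv_ne_zero ht.ne'), smul_closedBall' (inv_ne_zero ht.ne'), smul_zero,
    norm_inv, Real.norm_eq_abs, abs_of_pos ht, mul_comm r t, inv_mul_cancel_left₀ ht.ne']

lemma relEx_inv_smul {t : ℝ} (ht : 0 < t) (r : ℝ) (S T : Set E) :
    relEx 0 r (t⁻¹ • S) (t⁻¹ • T) = relEx 0 (r * t) S T := by
  rw [relEx, relEx, inv_smul_inter_closedBall ht, ex_smul₀ (inv_ne_zero ht.ne'),
    ENNReal.toReal_smul, NNReal.smul_def, coe_nnnorm, norm_inv, Real.norm_eq_abs,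
    abs_of_pos ht, smul_eq_mul, inv_mul_eq_div, div_div, mul_comm t r]

lemma WW_inv_smul {t : ℝ} (ht : 0 < t) (r : ℝ) (S T : Set E) :
    WW 0 r (t⁻¹ • S) (t⁻¹ • T) = WW 0 (r * t) S T := by
  rw [WW, WW, relEx_inv_smul ht, relEx_inv_smul ht]

lemma WW_inv_smul_le {S T : Set E} (h0S : (0 : E) ∈ S) (h0T : (0 : E) ∈ T) {r t : ℝ}
    (hr : 0 < r) (ht : 0 < t) (hrt : r * t ≤ 1) :
    WW 0 r (t⁻¹ • S) (t⁻¹ • T) ≤ WW 0 1 S T / (r * t) := by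
  rw [WW_inv_smul ht, div_eq_inv_mul, ← one_div]
  exact WW_le_mul_WW_of_le h0S h0T (mul_pos hr ht) hrt

lemma infEDist_le_ex_add_infEDist (a : E) (S C : Set E) :
    infEDist a C ≤ ex S C + infEDist a S := by
  rw [← tsub_le_iff_left]
  refine le_infEDist.2 fun b hb => tsub_le_iff_left.2 ?_
  calc infEDist a C ≤ infEDist b C + edist a b := infEDist_le_infEDist_add_edist
    _ ≤ ex S C + edist a b := by gcongr; exact infEDist_le_ex hb

-- Points of `B` nearly closest to `a` lie in the ball of radius `R`.
lemma infEDist_inter_closedBall {a : E} {B : Set E} {r R : ℝ} (ha : a ∈ closedBall 0 r)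
    (h : infEDist a B < ENNReal.ofReal (R - r)) :
    infEDist a (B ∩ closedBall 0 R) = infEDist a B := by
  refine le_antisymm (le_of_forall_gt fun c hc => ?_) (infEDist_anti inter_subset_left)
  obtain ⟨b, hb, hab⟩ := infEDist_lt_iff.1 (lt_min hc h)
  have hbR : b ∈ closedBall (0 : E) R := by
    have : dist a b < R - r := edist_lt_ofReal.1 (hab.trans_le (min_le_right _ _))
    rw [mem_closedBall] at ha ⊢
    linarith [dist_triangle b a 0, dist_comm a b]
  exact infEDist_lt_iff.2 ⟨b, ⟨hb, hbR⟩, hab.trans_le (min_le_left _ _)⟩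

lemma ex_inter_closedBall_le_add {X B C : Set E} {r R : ℝ}
    (h : ex (X ∩ closedBall 0 r) B < ENNReal.ofReal (R - r)) :
    ex (X ∩ closedBall 0 r) C ≤ ex (X ∩ closedBall 0 r) B + ex (B ∩ closedBall 0 R) C :=
  ex_le_iff.2 fun a ha => calc
    infEDist a C ≤ ex (B ∩ closedBall 0 R) C + infEDist a (B ∩ closedBall 0 R) :=
        infEDist_le_ex_add_infEDist a _ C
    _ = infEDist a B + ex (B ∩ closedBall 0 R) C := by
        rw [infEDist_inter_closedBall ha.2 ((infEDist_le_ex ha).trans_lt h), add_comm]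
    _ ≤ _ := by gcongr; exact infEDist_le_ex ha

lemma relEx_le_two_mul_add {X Y B : Set E} {r : ℝ} (hr : 0 < r) (h0B : (0 : E) ∈ B)
    (h0Y : (0 : E) ∈ Y) (h : relEx 0 (2 * r) X B < 1 / 2) :
    relEx 0 r X Y ≤ 2 * (relEx 0 (2 * r) X B + relEx 0 (2 * r) B Y) := by
  have hr2 : r ≤ 2 * r := by linarith
  have hXB : ex (X ∩ closedBall 0 r) B < ENNReal.ofReal (2 * r - r) := by
    rw [ENNReal.lt_ofReal_iff_toReal_lt (ex_inter_closedBall_ne_top h0B r)]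
    have := (div_lt_iff₀ (by positivity)).1 h
    linarith [ex_inter_closedBall_mono (S := X) h0B hr2]
  have hXY : (ex (X ∩ closedBall 0 r) Y).toReal ≤
      (ex (X ∩ closedBall 0 r) B).toReal + (ex (B ∩ closedBall 0 (2 * r)) Y).toReal := by
    rw [← ENNReal.toReal_add (ex_inter_closedBall_ne_top h0B r)
      (ex_inter_closedBall_ne_top h0Y _)]
    exact ENNReal.toReal_mono (ENNReal.add_ne_top.2 ⟨ex_inter_closedBall_ne_top h0B r,
      ex_inter_closedBall_ne_top h0Y _⟩) (ex_inter_closedBall_le_add hXB)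
  calc relEx 0 r X Y
      ≤ ((ex (X ∩ closedBall 0 (2 * r)) B).toReal
          + (ex (B ∩ closedBall 0 (2 * r)) Y).toReal) / r := by
        refine div_le_div_of_nonneg_right ?_ hr.le
        linarith [ex_inter_closedBall_mono (S := X) h0B hr2]
    _ = 2 * (relEx 0 (2 * r) X B + relEx 0 (2 * r) B Y) := by
        unfold relEx
        field_simp

lemma WW_le_two_mul_add {X Y B : Set E} {r : ℝ} (hr : 0 < r)
    (h0X : (0 : E) ∈ X) (h0B : (0 : E) ∈ B) (h0Y : (0 : E) ∈ Y)
    (hXB : WW 0 (2 * r) X B < 1 / 2) (hBY : WW 0 (2 * r) B Y < 1 / 2) :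
    WW 0 r X Y ≤ 2 * (WW 0 (2 * r) X B + WW 0 (2 * r) B Y) := by
  have h₁ := relEx_le_two_mul_add (Y := Y) hr h0B h0Y ((le_max_left _ _).trans_lt hXB)
  have h₂ := relEx_le_two_mul_add (Y := X) hr h0B h0X ((le_max_right _ _).trans_lt hBY)
  have := le_max_left (relEx 0 (2 * r) X B) (relEx 0 (2 * r) B X)
  have := le_max_right (relEx 0 (2 * r) X B) (relEx 0 (2 * r) B X)
  have := le_max_left (relEx 0 (2 * r) B Y) (relEx 0 (2 * r) Y B)
  have := le_max_right (relEx 0 (2 * r) B Y) (relEx 0 (2 * r) Y B)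
  exact max_le (by unfold WW; linarith) (by unfold WW; linarith)

lemma AWT.of_tendsto_WW {F G : ℕ → Set E} {L : Set E} (hF : ∀ j, (0 : E) ∈ F j)
    (hG : ∀ j, (0 : E) ∈ G j) (hL : (0 : E) ∈ L)
    (hFG : ∀ r, 0 < r → Tendsto (fun j => WW 0 r (F j) (G j)) atTop (𝓝 0))
    (hGL : AWT G L) : AWT F L := by
  intro r hr
  have hFG₂ := hFG (2 * r) (by positivity)
  have hGL₂ := hGL (2 * r) (by positivity)
  refine squeeze_zero' (Eventually.of_forall fun j => WW_nonneg hr) ?_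
    (by simpa using (hFG₂.add hGL₂).const_mul 2)
  filter_upwards [hFG₂.eventually_lt_const one_half_pos,
    hGL₂.eventually_lt_const one_half_pos] with j h₁ h₂
  exact WW_le_two_mul_add hr (hF j) (hG j) hL h₁ h₂

lemma zero_mem_blowup {A : Set E} {x : E} (h : x ∈ A) (t : ℝ) : (0 : E) ∈ blowup A x t :=
  ⟨x, h, by simp⟩

lemma blowup_zero (S : Set E) (t : ℝ) : blowup S 0 t = t⁻¹ • S := by
  simp only [blowup, sub_zero, Set.image_smul]

lemma blowup_mul (A : Set E) (x : E) (s t : ℝ) : blowup A x (s * t) = t⁻¹ • blowup A x s := by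
  simp only [blowup, ← Set.image_smul, ← Set.image_comp, Function.comp_def, smul_smul, mul_inv,
    mul_comm]

lemma tendsto_WW_blowup_mul {A B : Set E} {x : E} (hx : x ∈ A) (hB0 : (0 : E) ∈ B)
    {s t δ : ℕ → ℝ} (ht_pos : ∀ j, 0 < t j) (ht : Tendsto t atTop (𝓝 0))
    (hδ : Tendsto δ atTop (𝓝 0)) (hs : ∀ j, WW 0 1 (blowup A x (s j)) B ≤ t j * δ j)
    {r : ℝ} (hr : 0 < r) :
    Tendsto (fun j => WW 0 r (blowup A x (s j * t j)) (blowup B 0 (t j))) atTop (𝓝 0) := by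
  refine squeeze_zero' (Eventually.of_forall fun j => WW_nonneg hr) ?_
    (by simpa using hδ.div_const r)
  have hrt : Tendsto (fun j => r * t j) atTop (𝓝 0) := by simpa using ht.const_mul r
  filter_upwards [hrt.eventually_lt_const one_pos] with j hj
  have hrt_pos : 0 < r * t j := mul_pos hr (ht_pos j)
  rw [blowup_mul, blowup_zero]
  calc _ ≤ WW 0 1 (blowup A x (s j)) B / (r * t j) :=
        WW_inv_smul_le (zero_mem_blowup hx _) hB0 hr (ht_pos j) hj.le
    _ ≤ t j * δ j / (r * t j) := by gcongr; exact hs j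
    _ = δ j / r := by field_simp [(ht_pos j).ne']

end

theorem isTangent_trans_general {n : ℕ} (A : Set (EuclideanSpace ℝ (Fin n)))
    (x : EuclideanSpace ℝ (Fin n)) (hx : x ∈ A)
    (B C : Set (EuclideanSpace ℝ (Fin n)))
    (hB : IsTangent A x B) (hC : IsTangent B 0 C) :
    IsTangent A x C := by
  obtain ⟨-, hB0, rs, hrs_pos, hrs, hAB⟩ := hB
  obtain ⟨hCc, hC0, ts, hts_pos, hts, hBC⟩ := hC
  -- The error at scale `rs i` is magnified by `1 / ts j` when blowing up further by `ts j`.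
  have h_diag : ∀ j : ℕ, ∃ i, rs i < 1 ∧
      WW 0 1 (blowup A x (rs i)) B < ts j * (1 / ((j : ℝ) + 1)) := fun j =>
    ((hrs.eventually_lt_const one_pos).and
      ((hAB 1 one_pos).eventually_lt_const (by have := hts_pos j; positivity))).exists
  choose I hI_lt hI_WW using h_diag
  refine ⟨hCc, hC0, fun j => rs (I j) * ts j, fun j => mul_pos (hrs_pos _) (hts_pos j), ?_, ?_⟩
  · exact squeeze_zero (fun j => (mul_pos (hrs_pos _) (hts_pos j)).le)
      (fun j => mul_le_of_le_one_left (hts_pos j).le (hI_lt j).le) hts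
  · exact AWT.of_tendsto_WW (fun j => zero_mem_blowup hx _) (fun j => zero_mem_blowup hB0 _) hC0
      (fun r hr => tendsto_WW_blowup_mul hx hB0 hts_pos hts
        tendsto_one_div_add_atTop_nhds_zero_nat (fun j => (hI_WW j).le) hr) hBC

/-- Iteration of tangents: a tangent set of a tangent set is a tangent set. -/
theorem isTangent_trans {n : ℕ} (A : Set (EuclideanSpace ℝ (Fin n)))
    (hAc : IsClosed A) (x : EuclideanSpace ℝ (Fin n)) (hx : x ∈ A)
    (B C : Set (EuclideanSpace ℝ (Fin n)))
    (hB : IsTangent A x B) (hC : IsTangent B 0 C) :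
    IsTangent A x C :=
  isTangent_trans_general A x hx B C hB hC
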